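/- arXiv:2102.05227 — 2 statements merged into one kernel-verified Lean document; each statement's English description precedes it below -/
import Mathlib

section
/- Let E ∈ ℕ, let 0 < η ≤ 2/E, and let k, l ∈ {0,…,E}. Then for every integer s with 1 ≤ s ≤ E − max(k,l), one has η^s · √(C(s+k,k)·C(s+l,l)) ≤ η·√((k+1)(l+1)). -/
/-!
Write `η ^ s = η * η ^ (s - 1)` and move `η ^ (s - 1)` under the square root as its square, one
copy per binomial. Each factor `η ^ (s - 1) * C(s + k, k)` is then at most `k + 1`, because
`η (s + k) ≤ η E ≤ 2`.
-/

-- Passing from `n` to `n + 1` multiplies the left side by `η (n + 2 + k) / (n + 2) ≤ 2 / (n + 2) ≤ 1`.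
theorem pow_mul_choose_le {η : ℝ} (hη : 0 ≤ η) {k : ℕ} :
    ∀ {n : ℕ}, η * ((n + 1 + k : ℕ) : ℝ) ≤ 2 → η ^ n * ((n + 1 + k).choose k : ℝ) ≤ k + 1
  | 0, _ => by simp [Nat.add_comm 1 k, Nat.choose_succ_self_right]
  | n + 1, h => by
    have ih := pow_mul_choose_le hη (n := n) (le_trans (by gcongr; omega) h)
    have hrec : ((n + 1 + k).choose k : ℝ) * (n + 2 + k) = ((n + 2 + k).choose k) * (n + 2) := by
      have := Nat.choose_mul_succ_eq (n + 1 + k) k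
      rw [show n + 1 + k + 1 - k = n + 2 by omega, show n + 1 + k + 1 = n + 2 + k by omega] at this
      exact_mod_cast this
    push_cast at h
    refine le_of_mul_le_mul_right ?_ (by positivity : (0 : ℝ) < n + 2)
    calc η ^ (n + 1) * ((n + 1 + 1 + k).choose k : ℝ) * (n + 2)
        = η * (n + 2 + k) * (η ^ n * (n + 1 + k).choose k) := by
          rw [show n + 1 + 1 + k = n + 2 + k by omega, pow_succ, mul_assoc, ← hrec]; ring
      _ ≤ 2 * (k + 1) := by gcongr; linarith
      _ ≤ (k + 1) * (n + 2) := by nlinarith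

theorem eta_pow_mul_sqrt_choose_le_general (E k l s : ℕ) (η : ℝ)
    (hη : 0 < η) (hη2 : η ≤ 2 / E)
    (hs1 : 1 ≤ s) (hs2 : s ≤ E - max k l) :
    η ^ s * Real.sqrt (((s + k).choose k : ℝ) * ((s + l).choose l : ℝ)) ≤
      η * Real.sqrt (((k : ℝ) + 1) * ((l : ℝ) + 1)) := by
  obtain ⟨n, rfl⟩ : ∃ n, s = n + 1 := ⟨s - 1, by omega⟩
  have hηE : η * E ≤ 2 := by
    rcases Nat.eq_zero_or_pos E with rfl | hE
    · simp
    · exact (le_div_iff₀ (by positivity)).mp hη2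
  have hbound {m : ℕ} (hm : m ≤ max k l) : η * ((n + 1 + m : ℕ) : ℝ) ≤ 2 :=
    le_trans (by gcongr; omega) hηE
  have hk := pow_mul_choose_le hη.le (hbound (le_max_left k l))
  have hl := pow_mul_choose_le hη.le (hbound (le_max_right k l))
  calc η ^ (n + 1) * Real.sqrt (((n + 1 + k).choose k : ℝ) * ((n + 1 + l).choose l : ℝ))
      = η * Real.sqrt ((η ^ n * (n + 1 + k).choose k) * (η ^ n * (n + 1 + l).choose l)) := by
        rw [show (η ^ n * (n + 1 + k).choose k) * (η ^ n * (n + 1 + l).choose l : ℝ)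
            = (η ^ n) ^ 2 * ((n + 1 + k).choose k * (n + 1 + l).choose l) by ring,
          Real.sqrt_mul (sq_nonneg (η ^ n)), Real.sqrt_sq (by positivity), pow_succ]
        ring
    _ ≤ η * Real.sqrt (((k : ℝ) + 1) * ((l : ℝ) + 1)) := by gcongr

theorem eta_pow_mul_sqrt_choose_le (E k l s : ℕ) (hE : 1 ≤ E) (η : ℝ)
    (hη : 0 < η) (hη2 : η ≤ 2 / E) (hk : k ≤ E) (hl : l ≤ E)
    (hs1 : 1 ≤ s) (hs2 : s ≤ E - max k l) :
    η ^ s * Real.sqrt (((s + k).choose k : ℝ) * ((s + l).choose l : ℝ)) ≤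
      η * Real.sqrt (((k : ℝ) + 1) * ((l : ℝ) + 1)) :=
  eta_pow_mul_sqrt_choose_le_general E k l s η hη hη2 hs1 hs2
end

section
/- For natural numbers r ≤ n with n ≥ 1, 2·C(n,r)·((r+1)/(n+1))^{r+1}·(1−(r+1)/(n+1))^{n−r} ≤ (√(r+1)/n)·exp((r+1)²/(n+1)). -/
/-!
Write `x = r + 1` and `m = n + 1`. Bounding `C(n, r) ≤ nʳ / r!` and, since `n - r = m - x`,
`(1 - x/m)^(n-r) ≤ exp (-(m - x) x / m) = exp (-x) · exp (x² / m)`, the left side is at most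
`2 xˣ e⁻ˣ / r! · (n/m)^x / n · exp (x² / m)`. Here `(n/m)^x ≤ 1`, and Stirling's lower bound
`x! ≥ √(2πx) (x/e)ˣ` together with `2 ≤ √(2π)` gives `2 xˣ e⁻ˣ ≤ √x · r!`.
-/

open Real Nat

theorem two_mul_sqrt_mul_div_exp_pow_le_factorial (k : ℕ) :
    2 * √k * (k / exp 1) ^ k ≤ k ! := by
  have h2 : (2 : ℝ) ≤ √(2 * π) := by
    rw [le_sqrt' (by norm_num)]
    nlinarith [pi_gt_three]
  calc 2 * √k * (k / exp 1) ^ k ≤ √(2 * π) * √k * (k / exp 1) ^ k := by gcongr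
    _ = √(2 * π * k) * (k / exp 1) ^ k := by rw [sqrt_mul (by positivity : (0 : ℝ) ≤ 2 * π) k]
    _ ≤ k ! := Stirling.le_factorial_stirling k

theorem two_mul_pow_mul_exp_neg_le_sqrt_mul_factorial (r : ℕ) :
    2 * ((r : ℝ) + 1) ^ (r + 1) * exp (-((r : ℝ) + 1)) ≤ √((r : ℝ) + 1) * r ! := by
  set x : ℝ := (r : ℝ) + 1 with hx
  have hx0 : 0 < x := by positivity
  have hstirling := two_mul_sqrt_mul_div_exp_pow_le_factorial (r + 1)
  have hexp : exp 1 ^ (r + 1) = exp x := by rw [← exp_nat_mul, mul_one, hx]; push_cast; rfl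
  push_cast [factorial_succ] at hstirling
  rw [← hx, div_pow, hexp] at hstirling
  have hsqrt : √x * √x = x := mul_self_sqrt hx0.le
  refine le_of_mul_le_mul_left ?_ (sqrt_pos.mpr hx0)
  calc √x * (2 * x ^ (r + 1) * exp (-x)) = 2 * √x * (x ^ (r + 1) / exp x) := by
        rw [exp_neg]; ring
    _ ≤ x * r ! := hstirling
    _ = √x * (√x * r !) := by rw [← mul_assoc, hsqrt]

theorem one_sub_pow_le_exp_neg_mul {p : ℝ} (hp : p ≤ 1) (k : ℕ) :
    (1 - p) ^ k ≤ exp (-(k * p)) := by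
  calc (1 - p) ^ k ≤ exp (-p) ^ k := by
        gcongr; linarith [add_one_le_exp (-p)]
    _ = exp (-(k * p)) := by rw [← exp_nat_mul, mul_neg]

theorem two_choose_mul_max_le (n r : ℕ) (h : r ≤ n) (hn : 1 ≤ n) :
    2 * (n.choose r : ℝ) * (((r : ℝ) + 1) / ((n : ℝ) + 1)) ^ (r + 1) *
        (1 - ((r : ℝ) + 1) / ((n : ℝ) + 1)) ^ (n - r) ≤
      Real.sqrt ((r : ℝ) + 1) / (n : ℝ) *
        Real.exp (((r : ℝ) + 1) ^ 2 / ((n : ℝ) + 1)) := by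
  set x : ℝ := (r : ℝ) + 1 with hx
  set m : ℝ := (n : ℝ) + 1 with hm
  have hn0 : (0 : ℝ) < n := by exact_mod_cast hn
  have hxm : x ≤ m := by simp only [hx, hm]; gcongr
  have hchoose : (n.choose r : ℝ) ≤ (n : ℝ) ^ r / r ! := choose_le_pow_div r n
  have hxm' : x / m ≤ 1 := div_le_one_of_le₀ hxm (by positivity)
  have hp : 0 ≤ 1 - x / m := sub_nonneg.mpr hxm'
  have htail : (1 - x / m) ^ (n - r) ≤ exp (-x) * exp (x ^ 2 / m) := by
    rw [← exp_add]
    convert one_sub_pow_le_exp_neg_mul hxm' (n - r) using 2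
    rw [cast_sub h, hx, hm]
    field_simp
    ring
  have hnm : ((n : ℝ) / m) ^ (r + 1) ≤ 1 :=
    pow_le_one₀ (by positivity) (div_le_one_of_le₀ (by linarith) (by positivity))
  calc 2 * (n.choose r : ℝ) * (x / m) ^ (r + 1) * (1 - x / m) ^ (n - r)
      ≤ 2 * ((n : ℝ) ^ r / r !) * (x / m) ^ (r + 1) * (exp (-x) * exp (x ^ 2 / m)) := by
        gcongr
    _ = 2 * x ^ (r + 1) * exp (-x) / r ! * (((n : ℝ) / m) ^ (r + 1) / n) * exp (x ^ 2 / m) := by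
        rw [div_pow, div_pow]
        field_simp
        ring
    _ ≤ √x * r ! / r ! * (1 / n) * exp (x ^ 2 / m) := by
        gcongr ?_ / _ * (?_ / _) * _
        exact two_mul_pow_mul_exp_neg_le_sqrt_mul_factorial r
    _ = √x / n * exp (x ^ 2 / m) := by
        field_simp
end
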